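/- In the Khalimsky plane, if p is a pure point, then for every open pure point q and every closed pure point r, the COTS-distances satisfy d(p,q) ≠ d(p,r); equivalently, points at the same COTS-distance from a pure point cannot consist of one open and one closed point. -/

import Mathlib

open Set

/-- The minimal open neighborhood of a point in a topological space. -/
def minOpenNhd {X : Type*} (t : TopologicalSpace X) (x : X) : Set X :=
  ⋂₀ {U : Set X | t.IsOpen U ∧ x ∈ U}

/-- The specialization-style preorder: `x ≤ y` iff `U_x ⊆ U_y`. -/
def specLE {X : Type*} (t : TopologicalSpace X) (x y : X) : Prop :=
  minOpenNhd t x ⊆ minOpenNhd t y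

/-- Two points are adjacent if distinct and comparable in the specialization order. -/
def Adjacent {X : Type*} (t : TopologicalSpace X) (x y : X) : Prop :=
  x ≠ y ∧ (specLE t x y ∨ specLE t y x)

/-- The adjacency set of a point. -/
def adjSet {X : Type*} (t : TopologicalSpace X) (x : X) : Set X := {y | Adjacent t x y}

/-- A COTS: a connected space in which every 3-point subset has a point separating
the other two. -/
def IsCOTS {X : Type*} (t : TopologicalSpace X) : Prop :=
  @ConnectedSpace X t ∧
    ∀ Y : Set X, Y.ncard = 3 →
      ∃ y ∈ Y, ∃ a ∈ Y \ {y}, ∃ b ∈ Y \ {y},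
        @connectedComponentIn X t {y}ᶜ a ≠ @connectedComponentIn X t {y}ᶜ b

/-- An endpoint of a COTS: a point with at most one neighbor. -/
def IsEndpoint {X : Type*} (t : TopologicalSpace X) (x : X) : Prop :=
  (adjSet t x).ncard ≤ 1

/-- A COTS-path: the continuous image of a finite COTS. -/
def IsCOTSPath {Y : Type*} (tY : TopologicalSpace Y) (P : Set Y) : Prop :=
  ∃ (C : Type) (tC : TopologicalSpace C), Finite C ∧ IsCOTS tC ∧
    ∃ f : C → Y, @Continuous C Y tC tY f ∧ Set.range f = P

/-- A COTS-path with prescribed start and end points. -/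
def IsCOTSPathFromTo {Y : Type*} (tY : TopologicalSpace Y) (P : Set Y) (a b : Y) : Prop :=
  ∃ (C : Type) (tC : TopologicalSpace C), Finite C ∧ IsCOTS tC ∧
    ∃ f : C → Y, @Continuous C Y tC tY f ∧ Set.range f = P ∧
      ∃ c₀ c₁ : C, IsEndpoint tC c₀ ∧ IsEndpoint tC c₁ ∧ f c₀ = a ∧ f c₁ = b

/-- A COTS-arc: the homeomorphic image of a finite COTS. -/
def IsCOTSArc {Y : Type*} (tY : TopologicalSpace Y) (A : Set Y) : Prop :=
  ∃ (C : Type) (tC : TopologicalSpace C), Finite C ∧ IsCOTS tC ∧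
    ∃ f : C → Y, @Topology.IsEmbedding C Y tC tY f ∧ Set.range f = A

/-- A COTS-arc with prescribed endpoints. -/
def IsCOTSArcFromTo {Y : Type*} (tY : TopologicalSpace Y) (A : Set Y) (a b : Y) : Prop :=
  ∃ (C : Type) (tC : TopologicalSpace C), Finite C ∧ IsCOTS tC ∧
    ∃ f : C → Y, @Topology.IsEmbedding C Y tC tY f ∧ Set.range f = A ∧
      ∃ c₀ c₁ : C, IsEndpoint tC c₀ ∧ IsEndpoint tC c₁ ∧ f c₀ = a ∧ f c₁ = b

/-- The COTS-distance: one less than the minimal cardinality of a COTS-arc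
joining two points (`⊤` if there is no such arc). -/
noncomputable def cotsDist {X : Type*} (t : TopologicalSpace X) (x y : X) : ℕ∞ :=
  sInf {n : ℕ∞ | ∃ A : Set X, IsCOTSArcFromTo t A x y ∧ (A.ncard : ℕ∞) = n + 1}

/-- The Khalimsky topology on ℤ. -/
def khal : TopologicalSpace ℤ :=
  TopologicalSpace.generateFrom
    {s : Set ℤ | ∃ n : ℤ, (Odd n ∧ s = {n}) ∨ (Even n ∧ s = {n - 1, n, n + 1})}

/-- The Khalimsky plane topology on ℤ × ℤ. -/
def khalPlane : TopologicalSpace (ℤ × ℤ) := @instTopologicalSpaceProd ℤ ℤ khal khal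

/-- A point of the Khalimsky plane is pure if its coordinates have the same parity. -/
def IsPurePt (p : ℤ × ℤ) : Prop := (Even p.1 ∧ Even p.2) ∨ (Odd p.1 ∧ Odd p.2)

/-- A digital Jordan curve: a finite set of at least 4 points such that removing
any point leaves a COTS-arc. -/
def IsJordanCurve {X : Type*} (t : TopologicalSpace X) (J : Set X) : Prop :=
  J.Finite ∧ 4 ≤ J.ncard ∧ ∀ j ∈ J, IsCOTSArc t (J \ {j})

/-- The interior of a digital Jordan curve in the Khalimsky plane: the union of the
finite (bounded) connected components of its complement. -/
def jInterior (J : Set (ℤ × ℤ)) : Set (ℤ × ℤ) :=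
  ⋃₀ {S | ∃ p ∉ J, S = @connectedComponentIn _ khalPlane Jᶜ p ∧ S.Finite}

/-!
From a pure point `p`, the COTS-distance to any point `x` is the Chebyshev distance
`max |p₁ - x₁| |p₂ - x₂|`. A minimal open neighbourhood has Chebyshev radius one, so a connected
set through `p` and `x` meets every Chebyshev sphere about `p` of radius up to the distance
(a discrete intermediate value theorem). Conversely, the staircase that moves diagonally and then
straight is a COTS-arc: since the coordinates of `p` have equal parity, the parameter interval
of the Khalimsky line maps onto it homeomorphically. For pure `p` and `x` the Chebyshev distance
is congruent to `p₁ - x₁` modulo 2, which separates open from closed points.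
-/

open Topology

lemma mem_minOpenNhd_iff {X : Type*} [t : TopologicalSpace X] {x y : X} :
    y ∈ minOpenNhd t x ↔ y ⤳ x := by
  simp only [minOpenNhd, mem_sInter, specializes_iff_forall_open]
  exact ⟨fun h U hU hx => h U ⟨hU, hx⟩, fun h U hU => h U hU.1 hU.2⟩

lemma Adjacent.specializes_or {X : Type*} [t : TopologicalSpace X] {x y : X}
    (h : Adjacent t x y) : x ⤳ y ∨ y ⤳ x :=
  h.2.imp (fun h => mem_minOpenNhd_iff.1 (h (mem_minOpenNhd_iff.2 specializes_rfl)))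
    (fun h => mem_minOpenNhd_iff.1 (h (mem_minOpenNhd_iff.2 specializes_rfl)))

lemma Specializes.isPreconnected_pair {X : Type*} [TopologicalSpace X] {x y : X}
    (h : x ⤳ y) : IsPreconnected ({x, y} : Set X) :=
  isPreconnected_singleton.subset_closure (singleton_subset_iff.2 (mem_insert _ _))
    (insert_subset (subset_closure rfl) (singleton_subset_iff.2 (specializes_iff_mem_closure.1 h)))

lemma Topology.isEmbedding_of_specializes_iff {X Y : Type*} [TopologicalSpace X]
    [tY : TopologicalSpace Y] [Finite X] [T0Space X] {f : X → Y}
    (hf : ∀ x y, f x ⤳ f y ↔ x ⤳ y) : IsEmbedding f := by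
  refine ⟨⟨?_⟩, fun x y hxy =>
    ((hf x y).1 (hxy ▸ specializes_rfl)).antisymm ((hf y x).1 (hxy ▸ specializes_rfl)) |>.eq⟩
  have hinduced : @IsInducing X Y (tY.induced f) tY f := @IsInducing.mk _ _ (tY.induced f) tY f rfl
  have hspec : ∀ x y : X, @Specializes X (tY.induced f) x y ↔ x ⤳ y := fun x y =>
    (@IsInducing.specializes_iff X Y (tY.induced f) tY x y f hinduced).symm.trans (hf x y)
  ext U
  rw [@isOpen_iff_forall_specializes X (tY.induced f), isOpen_iff_forall_specializes]
  simp only [hspec]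

lemma IsPreconnected.Icc_subset_image {X : Type*} [TopologicalSpace X] {S : Set X}
    (hS : IsPreconnected S) {φ : X → ℤ}
    (hφ : ∀ z, ∃ U, IsOpen U ∧ z ∈ U ∧ ∀ w ∈ U, |φ w - φ z| ≤ 1)
    {a b : X} (ha : a ∈ S) (hb : b ∈ S) : Icc (φ a) (φ b) ⊆ φ '' S := by
  intro k hk
  by_contra hkS
  have hne : ∀ z ∈ S, φ z ≠ k := fun z hz h => hkS ⟨z, hz, h⟩
  choose U hUo hzU hUφ using hφ
  obtain ⟨w, hwS, hwlo, hwhi⟩ :=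
    hS (⋃ z ∈ {z ∈ S | φ z < k}, U z) (⋃ z ∈ {z ∈ S | k < φ z}, U z)
      (isOpen_biUnion fun z _ => hUo z) (isOpen_biUnion fun z _ => hUo z)
      (fun z hz => (hne z hz).lt_or_gt.imp (fun h => mem_biUnion ⟨hz, h⟩ (hzU z))
        (fun h => mem_biUnion ⟨hz, h⟩ (hzU z)))
      ⟨a, ha, mem_biUnion ⟨ha, lt_of_le_of_ne hk.1 (hne a ha)⟩ (hzU a)⟩
      ⟨b, hb, mem_biUnion ⟨hb, lt_of_le_of_ne' hk.2 (hne b hb)⟩ (hzU b)⟩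
  simp only [mem_iUnion, exists_prop] at hwlo hwhi
  obtain ⟨z₁, ⟨-, hz₁⟩, hw₁⟩ := hwlo
  obtain ⟨z₂, ⟨-, hz₂⟩, hw₂⟩ := hwhi
  have h₁ := abs_le.1 (hUφ z₁ w hw₁)
  have h₂ := abs_le.1 (hUφ z₂ w hw₂)
  exact hne w hwS (by omega)

lemma Set.exists_lt_lt_of_ncard_eq_three {α : Type*} [LinearOrder α] {Y : Set α}
    (hY : Y.ncard = 3) : ∃ x y z, x < y ∧ y < z ∧ Y = {x, y, z} := by
  have hfin : Y.Finite := finite_of_ncard_pos (by omega)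
  have hcard : hfin.toFinset.card = 3 := by rwa [← ncard_eq_toFinset_card Y hfin]
  set e := hfin.toFinset.orderEmbOfFin hcard
  refine ⟨e 0, e 1, e 2, e.strictMono (by decide), e.strictMono (by decide), ?_⟩
  rw [← hfin.coe_toFinset, ← Finset.range_orderEmbOfFin _ hcard]
  simp only [Fin.range_fin_succ, Fin.tail, range_eq_empty, insert_empty_eq]
  rfl

def khalNhd (n : ℤ) : Set ℤ := {m | m = n ∨ (n % 2 = 0 ∧ n - 1 ≤ m ∧ m ≤ n + 1)}

lemma mem_khalNhd {m n : ℤ} : m ∈ khalNhd n ↔ m = n ∨ (n % 2 = 0 ∧ n - 1 ≤ m ∧ m ≤ n + 1) :=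
  Iff.rfl

lemma abs_sub_le_one_of_mem_khalNhd {m n : ℤ} (h : m ∈ khalNhd n) : |m - n| ≤ 1 := by
  rw [mem_khalNhd] at h
  rw [abs_le]
  omega

lemma isOpen_khalNhd (n : ℤ) : khal.IsOpen (khalNhd n) := by
  refine TopologicalSpace.GenerateOpen.basic _ ⟨n, ?_⟩
  rcases Int.even_or_odd n with hn | hn
  · have := Int.even_iff.1 hn
    refine Or.inr ⟨hn, ?_⟩
    ext m
    simp only [mem_khalNhd, mem_insert_iff, mem_singleton_iff]
    omega
  · have := Int.odd_iff.1 hn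
    refine Or.inl ⟨hn, ?_⟩
    ext m
    simp only [mem_khalNhd, mem_singleton_iff]
    omega

lemma khalNhd_subset_of_isOpen {U : Set ℤ} (hU : khal.IsOpen U) {n : ℤ} (hn : n ∈ U) :
    khalNhd n ⊆ U := by
  induction hU generalizing n with
  | basic s hs =>
    obtain ⟨c, ⟨hc, rfl⟩ | ⟨hc, rfl⟩⟩ := hs
    · have := Int.odd_iff.1 hc
      intro m hm
      simp only [mem_khalNhd, mem_singleton_iff] at hm hn ⊢
      omega
    · have := Int.even_iff.1 hc
      intro m hm
      simp only [mem_khalNhd, mem_insert_iff, mem_singleton_iff] at hm hn ⊢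
      omega
  | univ => exact subset_univ _
  | inter s t _ _ hs ht => exact subset_inter (hs hn.1) (ht hn.2)
  | sUnion S _ hS =>
    obtain ⟨s, hsS, hns⟩ := hn
    exact (hS s hsS hns).trans (subset_sUnion_of_mem hsS)

lemma khal_specializes_iff {m n : ℤ} : @Specializes ℤ khal m n ↔ m ∈ khalNhd n := by
  let := khal
  rw [specializes_iff_forall_open]
  exact ⟨fun h => h _ (isOpen_khalNhd n) (Or.inl rfl),
    fun h U hU hn => khalNhd_subset_of_isOpen hU hn h⟩

lemma khal_t0Space : @T0Space ℤ khal := by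
  let := khal
  refine (t0Space_iff_inseparable ℤ).2 fun m n h => ?_
  have h₁ := khal_specializes_iff.1 h.specializes
  have h₂ := khal_specializes_iff.1 h.specializes'
  rw [mem_khalNhd] at h₁ h₂
  omega

lemma khal_isPreconnected_Icc (a b : ℤ) : @IsPreconnected ℤ khal (Icc a b) := by
  let := khal
  rcases lt_or_ge b a with hba | hab
  · rw [Icc_eq_empty_of_lt hba]
    exact isPreconnected_empty
  induction b, hab using Int.leInduction with
  | base => simpa using isPreconnected_singleton
  | succ n han ih =>
    have hpair : IsPreconnected ({n, n + 1} : Set ℤ) := by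
      rcases Int.emod_two_eq_zero_or_one n with hn | hn
      · rw [pair_comm]
        exact (khal_specializes_iff.2 (Or.inr ⟨hn, by omega, by omega⟩)).isPreconnected_pair
      · exact (khal_specializes_iff.2 (Or.inr ⟨by omega, by omega, by omega⟩)).isPreconnected_pair
    have hunion : Icc a (n + 1) = Icc a n ∪ {n, n + 1} := by
      ext m
      simp only [mem_Icc, mem_union, mem_insert_iff, mem_singleton_iff]
      omega
    rw [hunion]
    exact ih.union n ⟨han, le_rfl⟩ (mem_insert _ _) hpair

section KhalimskyInterval

variable {a b : ℤ}

lemma khalInterval_specializes_iff {w z : Icc a b} :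
    @Specializes _ (khal.induced Subtype.val) w z ↔ (w : ℤ) ∈ khalNhd z := by
  let := khal
  exact (subtype_specializes_iff w z).trans khal_specializes_iff

lemma khalInterval_connectedComponentIn_ne {x y z : Icc a b} (hxy : x < y) (hyz : y < z) :
    @connectedComponentIn _ (khal.induced Subtype.val) {y}ᶜ x ≠
      @connectedComponentIn _ (khal.induced Subtype.val) {y}ᶜ z := by
  let := khal
  intro h
  have hx : x ∈ connectedComponentIn {y}ᶜ x := mem_connectedComponentIn hxy.ne
  have hz : z ∈ connectedComponentIn {y}ᶜ x := h ▸ mem_connectedComponentIn hyz.ne'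
  have hlip (t : Icc a b) : ∃ U : Set (Icc a b), IsOpen U ∧ t ∈ U ∧
      ∀ w ∈ U, |(w : ℤ) - t| ≤ 1 :=
    ⟨Subtype.val ⁻¹' khalNhd t, isOpen_induced (isOpen_khalNhd t), Or.inl rfl,
      fun w hw => abs_sub_le_one_of_mem_khalNhd hw⟩
  obtain ⟨t, ht, hty⟩ := isPreconnected_connectedComponentIn.Icc_subset_image hlip hx hz
    ⟨hxy.le, hyz.le⟩
  exact connectedComponentIn_subset _ _ ht (Subtype.ext hty)

lemma isCOTS_khalInterval (hab : a ≤ b) : IsCOTS (khal.induced (Subtype.val : Icc a b → ℤ)) := by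
  let := khal
  refine ⟨Subtype.connectedSpace ⟨⟨a, left_mem_Icc.2 hab⟩, khal_isPreconnected_Icc a b⟩,
    fun Y hY => ?_⟩
  obtain ⟨x, y, z, hxy, hyz, rfl⟩ := exists_lt_lt_of_ncard_eq_three hY
  exact ⟨y, by simp, x, by simp [hxy.ne], z, by simp [hyz.ne'],
    khalInterval_connectedComponentIn_ne hxy hyz⟩

lemma isEndpoint_khalInterval {c : Icc a b} (hc : (c : ℤ) = a ∨ (c : ℤ) = b) :
    IsEndpoint (khal.induced Subtype.val) c := by
  let := khal
  have hnear : ∀ w ∈ adjSet (khal.induced Subtype.val) c, (w : ℤ) ≠ c ∧ |(w : ℤ) - c| ≤ 1 := by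
    intro w hw
    refine ⟨fun h => hw.1 (Subtype.ext h.symm), ?_⟩
    rcases hw.specializes_or with h | h
    · rw [abs_sub_comm]
      exact abs_sub_le_one_of_mem_khalNhd (khalInterval_specializes_iff.1 h)
    · exact abs_sub_le_one_of_mem_khalNhd (khalInterval_specializes_iff.1 h)
  refine (ncard_le_one_iff (toFinite _)).2 fun {u v} hu hv => Subtype.ext ?_
  obtain ⟨hu₁, hu₂⟩ := hnear u hu
  obtain ⟨hv₁, hv₂⟩ := hnear v hv
  obtain ⟨hua, hub⟩ := u.2
  obtain ⟨hva, hvb⟩ := v.2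
  obtain ⟨hca, hcb⟩ := c.2
  rw [abs_le] at hu₂ hv₂
  omega

end KhalimskyInterval

lemma khalPlane_specializes_iff {u v : ℤ × ℤ} :
    @Specializes _ khalPlane u v ↔ u.1 ∈ khalNhd v.1 ∧ u.2 ∈ khalNhd v.2 := by
  let := khal
  exact specializes_prod.trans (and_congr khal_specializes_iff khal_specializes_iff)

lemma isOpen_khalNhd_prod (z : ℤ × ℤ) : khalPlane.IsOpen (khalNhd z.1 ×ˢ khalNhd z.2) := by
  let := khal
  exact IsOpen.prod (isOpen_khalNhd z.1) (isOpen_khalNhd z.2)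

lemma IsPurePt.emod_two_eq {p : ℤ × ℤ} (hp : IsPurePt p) : p.1 % 2 = p.2 % 2 := by
  rcases hp with ⟨h₁, h₂⟩ | ⟨h₁, h₂⟩
  · rw [Int.even_iff.1 h₁, Int.even_iff.1 h₂]
  · rw [Int.odd_iff.1 h₁, Int.odd_iff.1 h₂]

def chebDist (u v : ℤ × ℤ) : ℕ := max (u.1 - v.1).natAbs (u.2 - v.2).natAbs

lemma IsPreconnected.chebDist_add_one_le_ncard {S : Set (ℤ × ℤ)}
    (hS : @IsPreconnected _ khalPlane S) (hfin : S.Finite) {p x : ℤ × ℤ}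
    (hp : p ∈ S) (hx : x ∈ S) : chebDist p x + 1 ≤ S.ncard := by
  let := khalPlane
  have hlip (z : ℤ × ℤ) : ∃ U, IsOpen U ∧ z ∈ U ∧
      ∀ w ∈ U, |(chebDist p w : ℤ) - chebDist p z| ≤ 1 := by
    refine ⟨_, isOpen_khalNhd_prod z, ⟨Or.inl rfl, Or.inl rfl⟩, fun w hw => ?_⟩
    have h₁ := abs_le.1 (abs_sub_le_one_of_mem_khalNhd hw.1)
    have h₂ := abs_le.1 (abs_sub_le_one_of_mem_khalNhd hw.2)
    rw [abs_le]
    simp only [chebDist]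
    omega
  have hsub := hS.Icc_subset_image hlip hp hx
  simp only [chebDist, sub_self, Int.natAbs_zero, max_self, Nat.cast_zero] at hsub
  calc chebDist p x + 1 = (Icc (0 : ℤ) (chebDist p x)).ncard := by
        rw [← Nat.card_coe_set_eq, Nat.card_eq_fintype_card]
        have := Int.card_fintype_Icc_of_le (a := 0) (b := chebDist p x) (by omega)
        omega
    _ ≤ ((fun z => (chebDist p z : ℤ)) '' S).ncard := ncard_le_ncard hsub (hfin.image _)
    _ ≤ S.ncard := ncard_image_le hfin

lemma IsCOTSArcFromTo.chebDist_add_one_le_ncard {A : Set (ℤ × ℤ)} {p x : ℤ × ℤ}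
    (hA : IsCOTSArcFromTo khalPlane A p x) : chebDist p x + 1 ≤ A.ncard := by
  obtain ⟨C, tC, hC, hcots, f, hf, rfl, c₀, c₁, -, -, rfl, rfl⟩ := hA
  have := hcots.1
  have hconn : @IsPreconnected _ khalPlane (range f) :=
    @isPreconnected_range _ _ tC khalPlane _ f (@IsEmbedding.continuous _ _ f tC khalPlane hf)
  exact hconn.chebDist_add_one_le_ncard (finite_range f) ⟨c₀, rfl⟩ ⟨c₁, rfl⟩

lemma chebDist_emod_two {p x : ℤ × ℤ} (hp : IsPurePt p) (hx : IsPurePt x) :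
    (chebDist p x : ℤ) % 2 = (p.1 - x.1) % 2 := by
  have := hp.emod_two_eq
  have := hx.emod_two_eq
  simp only [chebDist]
  omega

def staircase (d k : ℤ) : ℤ := if 0 ≤ d then min k d else max (-k) d

lemma staircase_zero (d : ℤ) : staircase d 0 = 0 := by
  simp only [staircase]
  split_ifs <;> omega

lemma staircase_of_natAbs_le {d k : ℤ} (h : d.natAbs ≤ k) : staircase d k = d := by
  simp only [staircase]
  split_ifs <;> omega

lemma add_staircase_mem_khalNhd {a c d j k : ℤ} (hc : c % 2 = a % 2) (h : j ∈ khalNhd k) :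
    c + staircase d (j - a) ∈ khalNhd (c + staircase d (k - a)) := by
  simp only [mem_khalNhd, staircase] at h ⊢
  split_ifs <;> omega

lemma add_staircase_mem_khalNhd_iff {a c d j k : ℤ} (hc : c % 2 = a % 2)
    (hj : j - a ≤ d.natAbs) (hk : k - a ≤ d.natAbs) :
    c + staircase d (j - a) ∈ khalNhd (c + staircase d (k - a)) ↔ j ∈ khalNhd k := by
  simp only [mem_khalNhd, staircase]
  split_ifs <;> omega

/-- The parameter runs over `Icc p.1 (p.1 + chebDist p x)` rather than from `0`, so that on the
Khalimsky line it has the parity of the coordinates of the pure starting point `p`. -/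
def staircasePath (p x : ℤ × ℤ) (t : ℤ) : ℤ × ℤ :=
  (p.1 + staircase (x.1 - p.1) (t - p.1), p.2 + staircase (x.2 - p.2) (t - p.1))

lemma staircasePath_left (p x : ℤ × ℤ) : staircasePath p x p.1 = p := by
  simp [staircasePath, staircase_zero]

lemma staircasePath_right (p x : ℤ × ℤ) : staircasePath p x (p.1 + chebDist p x) = x := by
  simp only [staircasePath, add_sub_cancel_left]
  rw [staircase_of_natAbs_le (by simp only [chebDist]; omega),
    staircase_of_natAbs_le (by simp only [chebDist]; omega)]
  simp

lemma staircasePath_specializes_iff {p : ℤ × ℤ} (hp : IsPurePt p) (x : ℤ × ℤ) {j k : ℤ}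
    (hj : j ≤ p.1 + chebDist p x) (hk : k ≤ p.1 + chebDist p x) :
    @Specializes _ khalPlane (staircasePath p x j) (staircasePath p x k) ↔ j ∈ khalNhd k := by
  have hp₂ := hp.emod_two_eq.symm
  rw [khalPlane_specializes_iff]
  refine ⟨fun ⟨h₁, h₂⟩ => ?_, fun h => ⟨add_staircase_mem_khalNhd rfl h,
    add_staircase_mem_khalNhd hp₂ h⟩⟩
  simp only [chebDist] at hj hk
  by_cases hdom : (x.2 - p.2).natAbs ≤ (x.1 - p.1).natAbs
  · exact (add_staircase_mem_khalNhd_iff rfl (by omega) (by omega)).1 h₁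
  · exact (add_staircase_mem_khalNhd_iff hp₂ (by omega) (by omega)).1 h₂

lemma isEmbedding_staircasePath {p : ℤ × ℤ} (hp : IsPurePt p) (x : ℤ × ℤ) :
    @IsEmbedding (Icc p.1 (p.1 + chebDist p x)) _ (khal.induced Subtype.val) khalPlane
      (fun t => staircasePath p x t) :=
  @isEmbedding_of_specializes_iff _ _ (khal.induced Subtype.val) khalPlane _
    (@Subtype.t0Space _ khal khal_t0Space _) _ fun j k =>
    (staircasePath_specializes_iff hp x j.2.2 k.2.2).trans khalInterval_specializes_iff.symm

lemma exists_isCOTSArcFromTo_ncard_eq {p : ℤ × ℤ} (hp : IsPurePt p) (x : ℤ × ℤ) :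
    ∃ A, IsCOTSArcFromTo khalPlane A p x ∧ A.ncard = chebDist p x + 1 := by
  have hle : p.1 ≤ p.1 + chebDist p x := by omega
  have hf := isEmbedding_staircasePath hp x
  refine ⟨_, ⟨_, khal.induced Subtype.val, inferInstance, isCOTS_khalInterval hle, _, hf, rfl,
    ⟨p.1, le_rfl, hle⟩, ⟨p.1 + chebDist p x, hle, le_rfl⟩, isEndpoint_khalInterval (Or.inl rfl),
    isEndpoint_khalInterval (Or.inr rfl), staircasePath_left p x, staircasePath_right p x⟩, ?_⟩
  obtain ⟨-, hinj⟩ := hf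
  rw [ncard_range_of_injective hinj, Nat.card_eq_fintype_card]
  have := Int.card_fintype_Icc_of_le (a := p.1) (b := p.1 + chebDist p x) (by omega)
  omega

theorem cotsDist_khalPlane_eq_chebDist {p : ℤ × ℤ} (hp : IsPurePt p) (x : ℤ × ℤ) :
    cotsDist khalPlane p x = chebDist p x := by
  refine le_antisymm (sInf_le ?_) (le_sInf ?_)
  · obtain ⟨A, hA, hcard⟩ := exists_isCOTSArcFromTo_ncard_eq hp x
    exact ⟨A, hA, by rw [hcard]; push_cast; rfl⟩
  · rintro n ⟨A, hA, hcard⟩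
    rw [← ENat.add_le_add_iff_right ENat.one_ne_top, ← hcard]
    exact_mod_cast hA.chebDist_add_one_le_ncard

/-- From a pure point of the Khalimsky plane, an open pure point and a closed pure
point are never at the same COTS-distance. -/
theorem stmt11 (p q r : ℤ × ℤ) (hp : IsPurePt p)
    (hq : Odd q.1 ∧ Odd q.2) (hr : Even r.1 ∧ Even r.2) :
    cotsDist khalPlane p q ≠ cotsDist khalPlane p r := by
  rw [cotsDist_khalPlane_eq_chebDist hp, cotsDist_khalPlane_eq_chebDist hp, Ne, Nat.cast_inj]
  intro h
  have hq₁ := chebDist_emod_two hp (Or.inr hq)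
  have hr₁ := chebDist_emod_two hp (Or.inl hr)
  have := Int.odd_iff.1 hq.1
  have := Int.even_iff.1 hr.1
  omega
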